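/- arXiv:2011.11746 — 7 statements merged into one kernel-verified Lean document; each statement's English description precedes it below -/
import Mathlib

section
/- Let a_L, a_R > 0 and U_L, U_R be real numbers. Define Q_N = (U_R - U_L)·a_L U_L - (1/2)(a_R U_R² - a_L U_L²). Then Q_N = -(a_L/2)(1 - a_L/a_R) U_L² - (1/(2 a_R))(a_R U_R - a_L U_L)². In particular Q_N ≤ -(a_L/2)(1 - a_L/a_R) U_L². -/
theorem upwind_interface_term_eq (aL aR UL UR : ℝ) (haR : aR ≠ 0) :
    (UR - UL) * (aL * UL) - (1 / 2) * (aR * UR ^ 2 - aL * UL ^ 2)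
      = -(aL / 2) * (1 - aL / aR) * UL ^ 2 - (1 / (2 * aR)) * (aR * UR - aL * UL) ^ 2 := by
  field_simp
  ring

theorem stmt2_general (aL aR UL UR : ℝ) (haR : 0 < aR) :
    (UR - UL) * (aL * UL) - (1 / 2) * (aR * UR ^ 2 - aL * UL ^ 2)
      = -(aL / 2) * (1 - aL / aR) * UL ^ 2 - (1 / (2 * aR)) * (aR * UR - aL * UL) ^ 2 ∧
    (UR - UL) * (aL * UL) - (1 / 2) * (aR * UR ^ 2 - aL * UL ^ 2)
      ≤ -(aL / 2) * (1 - aL / aR) * UL ^ 2 := by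
  have hQ := upwind_interface_term_eq aL aR UL UR haR.ne'
  refine ⟨hQ, ?_⟩
  rw [hQ]
  exact sub_le_self _ (by positivity)

/-- The DGSEM interface term `Q_N` with upwind flux equals the PDE interface
contribution plus a nonpositive dissipation measuring the Rankine-Hugoniot violation. -/
theorem stmt2 (aL aR UL UR : ℝ) (haL : 0 < aL) (haR : 0 < aR) :
    (UR - UL) * (aL * UL) - (1 / 2) * (aR * UR ^ 2 - aL * UL ^ 2)
      = -(aL / 2) * (1 - aL / aR) * UL ^ 2 - (1 / (2 * aR)) * (aR * UR - aL * UL) ^ 2 ∧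
    (UR - UL) * (aL * UL) - (1 / 2) * (aR * UR ^ 2 - aL * UL ^ 2)
      ≤ -(aL / 2) * (1 - aL / aR) * UL ^ 2 :=
  stmt2_general aL aR UL UR haR
end

section
/- Consider the scalar advection problem u_t + a u_x = 0 on [-1,1] with a = a_L > 0 for x ≤ 0 and a = a_R > 0 for x > 0, homogeneous inflow boundary condition u(-1,t) = 0, and the conservative interface condition a_L u(0⁻,t) = a_R u(0⁺,t). For smooth solutions on each subdomain, the L² energy satisfies (1/2) d/dt (‖u‖²_L + ‖u‖²_R) ≤ -(a_L/2)(1 - a_L/a_R) u(0⁻,t)². -/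
/-!
On each subdomain, differentiating under the integral sign and using `u_t = -a u_x` turns
`d/dt ∫ u²` into `-a ∫ (u²)_x`, i.e. the boundary flux `a (u(left)² - u(right)²)`. The inflow
term vanishes, and eliminating `u(0⁺) = (a_L / a_R) u(0⁻)` from the interface flux leaves
`(1/2) E' = -(a_L/2)(1 - a_L/a_R) u(0⁻)² - (a_R/2) u(1)²`.
-/

open Function intervalIntegral

section Leibniz

variable {E : Type*} [NormedAddCommGroup E] [NormedSpace ℝ E]

theorem hasDerivAt_intervalIntegral_of_continuous_uncurry_deriv {F F' : ℝ → ℝ → E}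
    {p q t : ℝ} (hF : ∀ τ, Continuous (F τ)) (hF' : Continuous (uncurry F'))
    (hderiv : ∀ x ∈ Set.uIcc p q, ∀ τ, HasDerivAt (fun s => F s x) (F' τ x) τ) :
    HasDerivAt (fun τ => ∫ x in p..q, F τ x) (∫ x in p..q, F' t x) t := by
  obtain ⟨M, hM⟩ := ((isCompact_closedBall t 1).prod isCompact_uIcc).exists_bound_of_continuousOn
    hF'.continuousOn
  refine (hasDerivAt_integral_of_dominated_loc_of_deriv_le (bound := fun _ => M)
    (Metric.ball_mem_nhds t one_pos) (.of_forall fun τ => (hF τ).aestronglyMeasurable)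
    ((hF t).intervalIntegrable p q) ?_ ?_ intervalIntegrable_const ?_).2
  · exact (hF'.comp (continuous_const.prodMk continuous_id)).aestronglyMeasurable
  · exact .of_forall fun x hx τ hτ =>
      hM (τ, x) ⟨Metric.ball_subset_closedBall hτ, Set.uIoc_subset_uIcc hx⟩
  · exact .of_forall fun x hx τ _ => hderiv x (Set.uIoc_subset_uIcc hx) τ

end Leibniz

section Partial

variable {E : Type*} [NormedAddCommGroup E] [NormedSpace ℝ E] {f : ℝ → ℝ → E}

theorem hasDerivAt_fderiv_uncurry_snd (hf : Differentiable ℝ (uncurry f)) (x τ : ℝ) :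
    HasDerivAt (fun s => f x s) (fderiv ℝ (uncurry f) (x, τ) (0, 1)) τ :=
  (hf (x, τ)).hasFDerivAt.comp_hasDerivAt_of_eq τ
    ((hasDerivAt_const τ x).prodMk (hasDerivAt_id τ)) rfl

theorem hasDerivAt_fderiv_uncurry_fst (hf : Differentiable ℝ (uncurry f)) (x τ : ℝ) :
    HasDerivAt (fun y => f y τ) (fderiv ℝ (uncurry f) (x, τ) (1, 0)) x :=
  (hf (x, τ)).hasFDerivAt.comp_hasDerivAt_of_eq x
    ((hasDerivAt_id x).prodMk (hasDerivAt_const x τ)) rfl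

theorem ContDiff.continuous_uncurry_deriv_snd (hf : ContDiff ℝ 1 (uncurry f)) :
    Continuous (uncurry fun x τ => deriv (fun s => f x s) τ) := by
  have hdiff := hf.differentiable one_ne_zero
  simp only [uncurry_def, (hasDerivAt_fderiv_uncurry_snd hdiff _ _).deriv]
  exact (hf.continuous_fderiv one_ne_zero).clm_apply continuous_const

theorem ContDiff.continuous_uncurry_deriv_fst (hf : ContDiff ℝ 1 (uncurry f)) :
    Continuous (uncurry fun x τ => deriv (fun y => f y τ) x) := by
  have hdiff := hf.differentiable one_ne_zero
  simp only [uncurry_def, (hasDerivAt_fderiv_uncurry_fst hdiff _ _).deriv]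
  exact (hf.continuous_fderiv one_ne_zero).clm_apply continuous_const

end Partial

theorem hasDerivAt_integral_sq_of_advection {a p q t : ℝ} {u : ℝ → ℝ → ℝ}
    (hu : ContDiff ℝ 1 (uncurry u))
    (hpde : ∀ x s : ℝ, x ∈ Set.uIcc p q →
      deriv (fun τ => u x τ) s + a * deriv (fun y => u y s) x = 0) :
    HasDerivAt (fun τ => ∫ x in p..q, u x τ ^ 2) (a * (u p t ^ 2 - u q t ^ 2)) t := by
  have hdiff := hu.differentiable one_ne_zero
  have hdt x τ : HasDerivAt (fun s => u x s) (deriv (fun s => u x s) τ) τ :=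
    (hasDerivAt_fderiv_uncurry_snd hdiff x τ).differentiableAt.hasDerivAt
  have hdx x τ : HasDerivAt (fun y => u y τ) (deriv (fun y => u y τ) x) x :=
    (hasDerivAt_fderiv_uncurry_fst hdiff x τ).differentiableAt.hasDerivAt
  have hleibniz := hasDerivAt_intervalIntegral_of_continuous_uncurry_deriv
    (p := p) (q := q) (t := t) (F := fun τ x => u x τ ^ 2)
    (F' := fun τ x => 2 * u x τ * deriv (fun s => u x s) τ)
    (fun τ => (hu.continuous.comp (.prodMk_left τ)).pow 2)
    (show Continuous fun z : ℝ × ℝ => 2 * u z.2 z.1 * deriv (fun s => u z.2 s) z.1 from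
      (continuous_const.mul (hu.continuous.comp continuous_swap)).mul
        (hu.continuous_uncurry_deriv_snd.comp continuous_swap))
    (fun x _ τ => ((hdt x τ).fun_pow 2).congr_deriv (by ring))
  have hflux : ∫ x in p..q, 2 * u x t * deriv (fun y => u y t) x = u q t ^ 2 - u p t ^ 2 := by
    refine integral_eq_sub_of_hasDerivAt (f := fun x => u x t ^ 2)
      (fun x _ => ((hdx x t).fun_pow 2).congr_deriv (by ring)) (Continuous.intervalIntegrable ?_ _ _)
    exact (continuous_const.mul (hu.continuous.comp (.prodMk_left t))).mul
      (hu.continuous_uncurry_deriv_fst.comp (.prodMk_left t))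
  refine hleibniz.congr_deriv ?_
  calc ∫ x in p..q, 2 * u x t * deriv (fun s => u x s) t
      = ∫ x in p..q, -a * (2 * u x t * deriv (fun y => u y t) x) :=
        integral_congr fun x hx => by linear_combination (2 * u x t) * hpde x t hx
    _ = a * (u p t ^ 2 - u q t ^ 2) := by rw [integral_const_mul, hflux]; ring

theorem stmt4_general (aL aR : ℝ) (haR : 0 < aR)
    (uL uR : ℝ → ℝ → ℝ)
    (hregL : ContDiff ℝ 1 (Function.uncurry uL))
    (hregR : ContDiff ℝ 1 (Function.uncurry uR))
    (hpdeL : ∀ x t : ℝ, x ∈ Set.Icc (-1 : ℝ) 0 →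
      deriv (fun τ => uL x τ) t + aL * deriv (fun y => uL y t) x = 0)
    (hpdeR : ∀ x t : ℝ, x ∈ Set.Icc (0 : ℝ) 1 →
      deriv (fun τ => uR x τ) t + aR * deriv (fun y => uR y t) x = 0)
    (hbc : ∀ t : ℝ, uL (-1) t = 0)
    (hint : ∀ t : ℝ, aL * uL 0 t = aR * uR 0 t) :
    ∀ t E' : ℝ,
      HasDerivAt (fun τ => (∫ x in (-1 : ℝ)..0, (uL x τ) ^ 2)
                           + ∫ x in (0 : ℝ)..1, (uR x τ) ^ 2) E' t →
      (1 / 2) * E' ≤ -(aL / 2) * (1 - aL / aR) * (uL 0 t) ^ 2 := by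
  intro t E' hE
  have hL := hasDerivAt_integral_sq_of_advection (p := -1) (q := 0) (t := t) hregL
    fun x s hx => hpdeL x s (by rwa [Set.uIcc_of_le (by norm_num)] at hx)
  have hR := hasDerivAt_integral_sq_of_advection (p := 0) (q := 1) (t := t) hregR
    fun x s hx => hpdeR x s (by rwa [Set.uIcc_of_le (by norm_num)] at hx)
  have hinterface : uR 0 t = aL / aR * uL 0 t := by
    field_simp; linarith [hint t]
  have henergy : (1 / 2) * E' = -(aL / 2) * (1 - aL / aR) * uL 0 t ^ 2 - aR / 2 * uR 1 t ^ 2 := by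
    rw [hE.unique (hL.add hR), hbc t, hinterface]
    field_simp
    ring
  have houtflow : 0 ≤ aR / 2 * uR 1 t ^ 2 := by positivity
  linarith

/-- Energy dynamics for scalar advection with a discontinuous wave speed and the
conservative (Rankine-Hugoniot) interface condition: the L² energy rate satisfies
`(1/2) d/dt (‖u‖²_L + ‖u‖²_R) ≤ -(a_L/2)(1 - a_L/a_R) u(0⁻,t)²`. -/
theorem stmt4 (aL aR : ℝ) (haL : 0 < aL) (haR : 0 < aR)
    (uL uR : ℝ → ℝ → ℝ)
    (hregL : ContDiff ℝ 1 (Function.uncurry uL))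
    (hregR : ContDiff ℝ 1 (Function.uncurry uR))
    (hpdeL : ∀ x t : ℝ, x ∈ Set.Icc (-1 : ℝ) 0 →
      deriv (fun τ => uL x τ) t + aL * deriv (fun y => uL y t) x = 0)
    (hpdeR : ∀ x t : ℝ, x ∈ Set.Icc (0 : ℝ) 1 →
      deriv (fun τ => uR x τ) t + aR * deriv (fun y => uR y t) x = 0)
    (hbc : ∀ t : ℝ, uL (-1) t = 0)
    (hint : ∀ t : ℝ, aL * uL 0 t = aR * uR 0 t) :
    ∀ t E' : ℝ,
      HasDerivAt (fun τ => (∫ x in (-1 : ℝ)..0, (uL x τ) ^ 2)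
                           + ∫ x in (0 : ℝ)..1, (uR x τ) ^ 2) E' t →
      (1 / 2) * E' ≤ -(aL / 2) * (1 - aL / aR) * (uL 0 t) ^ 2 :=
  stmt4_general aL aR haR uL uR hregL hregR hpdeL hpdeR hbc hint
end

section
/- Let A_L, A_R be symmetric matrices as above and define the DGSEM interface term Q_N = ⟦Uᵀ⟧F* - (1/2)⟦Uᵀ A U⟧ with the upwind numerical flux F* satisfying the Rankine-Hugoniot condition. Then Q_N = Q(W_L, W_R) - (1/2)R⁺ - (1/2)R⁻, where Q(W_L, W_R) = -(1/2){W_L⁺ᵀ Λ̄_L⁺ W_L⁺ - W*⁺ᵀ Λ̄_R⁺ W*⁺} - (1/2){W_R⁻ᵀ|Λ̄_R⁻|W_R⁻ - W*⁻ᵀ|Λ̄_L⁻|W*⁻}, R⁺ = ‖√(Λ̄_R⁺)(W*⁺ - W_R⁺)‖² ≥ 0, R⁻ = ‖√(|Λ̄_L⁻|)(W*⁻ - W_L⁻)‖² ≥ 0. In particular Q_N ≤ Q(W_L, W_R). -/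
open Matrix Finset

/-!
Pass to characteristic variables `W = Pᵀ U` on each side. Pairing `U` with `P (Λ g)` gives
`∑ λᵢ Wᵢ gᵢ`, so each of the four products in `Q_N` becomes a diagonal sum; the
Rankine-Hugoniot condition is what allows `U_R ⬝ F*` to be computed from the right-hand
representation of `F*` and `U_L ⬝ F*` from the left-hand one. Component by component the
identity is then a completed square: on the right-moving characteristics the defect
`λ_R (W* - W_R)²` appears, on the left-moving ones `|λ_L| (W* - W_L)²`.
-/

namespace Matrix

variable {ι R : Type*} [Fintype ι] [DecidableEq ι] [CommSemiring R]

theorem dotProduct_mulVec_diagonal_mulVec (P : Matrix ι ι R) (u d g : ι → R) :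
    u ⬝ᵥ P *ᵥ (diagonal d *ᵥ g) = ∑ i, d i * (Pᵀ *ᵥ u) i * g i := by
  rw [dotProduct_mulVec, ← mulVec_transpose]
  simp only [dotProduct, mulVec_diagonal]
  exact sum_congr rfl fun i _ => by ring

theorem dotProduct_mul_diagonal_mul_transpose_mulVec (P : Matrix ι ι R) (u d : ι → R) :
    u ⬝ᵥ (P * diagonal d * Pᵀ) *ᵥ u = ∑ i, d i * (Pᵀ *ᵥ u) i * (Pᵀ *ᵥ u) i := by
  rw [Matrix.mul_assoc, ← mulVec_mulVec, ← mulVec_mulVec, dotProduct_mulVec_diagonal_mulVec]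

end Matrix

theorem upwind_component_pos {lamL lamR wL wR ws : ℝ} (hR : 0 ≤ lamR) :
    lamR * wR * ws - lamL * wL * wL - 1 / 2 * (lamR * wR * wR - lamL * wL * wL)
      = -(1 / 2) * (lamL * wL ^ 2 - lamR * ws ^ 2)
        - 1 / 2 * (Real.sqrt lamR * (ws - wR)) ^ 2 := by
  rw [mul_pow, Real.sq_sqrt hR]
  ring

theorem upwind_component_neg {lamL lamR wL wR ws : ℝ} (hL : lamL ≤ 0) (hR : lamR ≤ 0) :
    lamR * wR * wR - lamL * wL * ws - 1 / 2 * (lamR * wR * wR - lamL * wL * wL)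
      = -(1 / 2) * (|lamR| * wR ^ 2 - |lamL| * ws ^ 2)
        - 1 / 2 * (Real.sqrt |lamL| * (ws - wL)) ^ 2 := by
  rw [mul_pow, Real.sq_sqrt (abs_nonneg _), abs_of_nonpos hL, abs_of_nonpos hR]
  ring

/-- `p` marks the right-moving characteristics, the block `Λ̄⁺`. -/
theorem upwind_interface_identity {ι : Type*} [Fintype ι] (p : ι → Prop) [DecidablePred p]
    (lamL lamR wL wR ws : ι → ℝ) (hRpos : ∀ i, p i → 0 ≤ lamR i)
    (hLneg : ∀ i, ¬p i → lamL i ≤ 0) (hRneg : ∀ i, ¬p i → lamR i ≤ 0) :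
    ∑ i, lamR i * wR i * (if p i then ws i else wR i)
        - ∑ i, lamL i * wL i * (if p i then wL i else ws i)
        - 1 / 2 * (∑ i, lamR i * wR i * wR i - ∑ i, lamL i * wL i * wL i)
      = -(1 / 2) * (∑ i ∈ univ.filter p, lamL i * wL i ^ 2
            - ∑ i ∈ univ.filter p, lamR i * ws i ^ 2)
        - 1 / 2 * (∑ i ∈ univ.filter (¬p ·), |lamR i| * wR i ^ 2
            - ∑ i ∈ univ.filter (¬p ·), |lamL i| * ws i ^ 2)
        - 1 / 2 * ∑ i ∈ univ.filter p, (Real.sqrt (lamR i) * (ws i - wR i)) ^ 2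
        - 1 / 2 * ∑ i ∈ univ.filter (¬p ·), (Real.sqrt |lamL i| * (ws i - wL i)) ^ 2 := by
  have componentwise : ∀ i, lamR i * wR i * (if p i then ws i else wR i)
      - lamL i * wL i * (if p i then wL i else ws i)
      - 1 / 2 * (lamR i * wR i * wR i - lamL i * wL i * wL i)
      = if p i then -(1 / 2) * (lamL i * wL i ^ 2 - lamR i * ws i ^ 2)
          - 1 / 2 * (Real.sqrt (lamR i) * (ws i - wR i)) ^ 2
        else -(1 / 2) * (|lamR i| * wR i ^ 2 - |lamL i| * ws i ^ 2)
          - 1 / 2 * (Real.sqrt |lamL i| * (ws i - wL i)) ^ 2 := by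
    intro i
    by_cases hi : p i
    · simp only [hi, if_true]
      exact upwind_component_pos (hRpos i hi)
    · simp only [hi, if_false]
      exact upwind_component_neg (hLneg i hi) (hRneg i hi)
  have hSum := sum_congr rfl fun i (_ : i ∈ univ) => componentwise i
  rw [sum_ite] at hSum
  simp only [sum_sub_distrib, ← mul_sum] at hSum ⊢
  linarith

theorem stmt10_general (n nplus : ℕ)
    (PL PR AL AR : Matrix (Fin n) (Fin n) ℝ) (lamL lamR : Fin n → ℝ)
    (hAL : AL = PL * Matrix.diagonal lamL * PLᵀ)
    (hAR : AR = PR * Matrix.diagonal lamR * PRᵀ)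
    (hLneg : ∀ i : Fin n, nplus ≤ (i : ℕ) → lamL i < 0)
    (hRpos : ∀ i : Fin n, (i : ℕ) < nplus → 0 < lamR i)
    (hRneg : ∀ i : Fin n, nplus ≤ (i : ℕ) → lamR i < 0)
    (UL UR Wstar Fstar : Fin n → ℝ)
    (WL WR : Fin n → ℝ) (hWL : WL = PLᵀ.mulVec UL) (hWR : WR = PRᵀ.mulVec UR)
    -- upwind flux satisfying the Rankine-Hugoniot condition
    (hFL : Fstar = PL.mulVec ((Matrix.diagonal lamL).mulVec
        (fun i => if (i : ℕ) < nplus then WL i else Wstar i)))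
    (hFR : Fstar = PR.mulVec ((Matrix.diagonal lamR).mulVec
        (fun i => if (i : ℕ) < nplus then Wstar i else WR i)))
    (QN Q Rp Rm : ℝ)
    -- the DGSEM interface term
    (hQN : QN = (UR - UL) ⬝ᵥ Fstar
        - (1 / 2) * (UR ⬝ᵥ AR.mulVec UR - UL ⬝ᵥ AL.mulVec UL))
    -- the PDE interface contribution
    (hQ : Q = -(1 / 2) * ((∑ i ∈ Finset.univ.filter (fun i : Fin n => (i : ℕ) < nplus),
              lamL i * (WL i) ^ 2)
            - ∑ i ∈ Finset.univ.filter (fun i : Fin n => (i : ℕ) < nplus),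
              lamR i * (Wstar i) ^ 2)
        - (1 / 2) * ((∑ i ∈ Finset.univ.filter (fun i : Fin n => nplus ≤ (i : ℕ)),
              |lamR i| * (WR i) ^ 2)
            - ∑ i ∈ Finset.univ.filter (fun i : Fin n => nplus ≤ (i : ℕ)),
              |lamL i| * (Wstar i) ^ 2))
    -- the dissipation terms
    (hRp : Rp = ∑ i ∈ Finset.univ.filter (fun i : Fin n => (i : ℕ) < nplus),
        (Real.sqrt (lamR i) * (Wstar i - WR i)) ^ 2)
    (hRm : Rm = ∑ i ∈ Finset.univ.filter (fun i : Fin n => nplus ≤ (i : ℕ)),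
        (Real.sqrt |lamL i| * (Wstar i - WL i)) ^ 2) :
    QN = Q - (1 / 2) * Rp - (1 / 2) * Rm ∧ 0 ≤ Rp ∧ 0 ≤ Rm ∧ QN ≤ Q := by
  have hRp_nonneg : 0 ≤ Rp := hRp ▸ sum_nonneg fun i _ => sq_nonneg _
  have hRm_nonneg : 0 ≤ Rm := hRm ▸ sum_nonneg fun i _ => sq_nonneg _
  have hFluxR : UR ⬝ᵥ Fstar
      = ∑ i, lamR i * WR i * (if (i : ℕ) < nplus then Wstar i else WR i) := by
    rw [hFR, dotProduct_mulVec_diagonal_mulVec, ← hWR]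
  have hFluxL : UL ⬝ᵥ Fstar
      = ∑ i, lamL i * WL i * (if (i : ℕ) < nplus then WL i else Wstar i) := by
    rw [hFL, dotProduct_mulVec_diagonal_mulVec, ← hWL]
  have hEnergyR : UR ⬝ᵥ AR *ᵥ UR = ∑ i, lamR i * WR i * WR i := by
    rw [hAR, dotProduct_mul_diagonal_mul_transpose_mulVec, ← hWR]
  have hEnergyL : UL ⬝ᵥ AL *ᵥ UL = ∑ i, lamL i * WL i * WL i := by
    rw [hAL, dotProduct_mul_diagonal_mul_transpose_mulVec, ← hWL]
  have hSplit : QN = Q - (1 / 2) * Rp - (1 / 2) * Rm := by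
    rw [hQN, sub_dotProduct, hFluxR, hFluxL, hEnergyR, hEnergyL, hQ, hRp, hRm]
    simpa only [not_lt] using upwind_interface_identity (fun i : Fin n => (i : ℕ) < nplus)
      lamL lamR WL WR Wstar (fun i hi => (hRpos i hi).le)
      (fun i hi => (hLneg i (not_lt.mp hi)).le) (fun i hi => (hRneg i (not_lt.mp hi)).le)
  exact ⟨hSplit, hRp_nonneg, hRm_nonneg, by linarith⟩

/-- Inferred stability of the DGSEM interface term for a 1D symmetric system:
`Q_N = ⟦Uᵀ⟧F* - (1/2)⟦UᵀAU⟧ = Q(W_L, W_R) - (1/2)R⁺ - (1/2)R⁻` with `R± ≥ 0`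
measuring the failure of the traces to match the upwind Rankine-Hugoniot states;
in particular `Q_N ≤ Q(W_L, W_R)`, the PDE interface contribution. -/
theorem stmt10 (n nplus : ℕ)
    (PL PR AL AR : Matrix (Fin n) (Fin n) ℝ) (lamL lamR : Fin n → ℝ)
    (hPL : PLᵀ * PL = 1) (hPR : PRᵀ * PR = 1)
    (hAL : AL = PL * Matrix.diagonal lamL * PLᵀ)
    (hAR : AR = PR * Matrix.diagonal lamR * PRᵀ)
    (hLpos : ∀ i : Fin n, (i : ℕ) < nplus → 0 < lamL i)
    (hLneg : ∀ i : Fin n, nplus ≤ (i : ℕ) → lamL i < 0)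
    (hRpos : ∀ i : Fin n, (i : ℕ) < nplus → 0 < lamR i)
    (hRneg : ∀ i : Fin n, nplus ≤ (i : ℕ) → lamR i < 0)
    (UL UR Wstar Fstar : Fin n → ℝ)
    (WL WR : Fin n → ℝ) (hWL : WL = PLᵀ.mulVec UL) (hWR : WR = PRᵀ.mulVec UR)
    -- upwind flux satisfying the Rankine-Hugoniot condition
    (hFL : Fstar = PL.mulVec ((Matrix.diagonal lamL).mulVec
        (fun i => if (i : ℕ) < nplus then WL i else Wstar i)))
    (hFR : Fstar = PR.mulVec ((Matrix.diagonal lamR).mulVec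
        (fun i => if (i : ℕ) < nplus then Wstar i else WR i)))
    (QN Q Rp Rm : ℝ)
    -- the DGSEM interface term
    (hQN : QN = (UR - UL) ⬝ᵥ Fstar
        - (1 / 2) * (UR ⬝ᵥ AR.mulVec UR - UL ⬝ᵥ AL.mulVec UL))
    -- the PDE interface contribution
    (hQ : Q = -(1 / 2) * ((∑ i ∈ Finset.univ.filter (fun i : Fin n => (i : ℕ) < nplus),
              lamL i * (WL i) ^ 2)
            - ∑ i ∈ Finset.univ.filter (fun i : Fin n => (i : ℕ) < nplus),
              lamR i * (Wstar i) ^ 2)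
        - (1 / 2) * ((∑ i ∈ Finset.univ.filter (fun i : Fin n => nplus ≤ (i : ℕ)),
              |lamR i| * (WR i) ^ 2)
            - ∑ i ∈ Finset.univ.filter (fun i : Fin n => nplus ≤ (i : ℕ)),
              |lamL i| * (Wstar i) ^ 2))
    -- the dissipation terms
    (hRp : Rp = ∑ i ∈ Finset.univ.filter (fun i : Fin n => (i : ℕ) < nplus),
        (Real.sqrt (lamR i) * (Wstar i - WR i)) ^ 2)
    (hRm : Rm = ∑ i ∈ Finset.univ.filter (fun i : Fin n => nplus ≤ (i : ℕ)),
        (Real.sqrt |lamL i| * (Wstar i - WL i)) ^ 2) :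
    QN = Q - (1 / 2) * Rp - (1 / 2) * Rm ∧ 0 ≤ Rp ∧ 0 ≤ Rm ∧ QN ≤ Q :=
  stmt10_general n nplus PL PR AL AR lamL lamR hAL hAR hLneg hRpos hRneg UL UR Wstar Fstar WL WR hWL
    hWR hFL hFR QN Q Rp Rm hQN hQ hRp hRm
end

section
/- Suppose Λ̄_L⁺, Λ̄_R⁺ are positive diagonal matrices, |Λ̄_L⁻|, |Λ̄_R⁻| positive diagonal matrices, and the coupling relations w*⁺ = M̄⁺ w_L⁺, w*⁻ = M̄⁻ w_R⁻ hold with matrices M̄±. If there exist μ⁺ > 0 and μ⁻ > 0 such that Λ̄_L⁺ - μ⁺ (M̄⁺)ᵀ Λ̄_R⁺ M̄⁺ is positive semidefinite and μ⁻|Λ̄_R⁻| - (M̄⁻)ᵀ|Λ̄_L⁻| M̄⁻ is positive semidefinite, then the discounted interface term Q_B = -(1/2){w_L⁺ᵀΛ̄_L⁺w_L⁺ - μ⁺ w*⁺ᵀΛ̄_R⁺w*⁺} - (1/2){μ⁻ w_R⁻ᵀ|Λ̄_R⁻|w_R⁻ - w*⁻ᵀ|Λ̄_L⁻|w*⁻}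 satisfies Q_B ≤ 0 for all w_L⁺, w_R⁻. -/
open Matrix

namespace Matrix

variable {n R : Type*} [Fintype n]

theorem dotProduct_transpose_mul_mul_mulVec [CommSemiring R] (A D : Matrix n n R) (x : n → R) :
    x ⬝ᵥ (Aᵀ * D * A) *ᵥ x = A *ᵥ x ⬝ᵥ D *ᵥ (A *ᵥ x) := by
  rw [← mulVec_mulVec, ← mulVec_mulVec, dotProduct_transpose_mulVec, dotProduct_comm]

theorem PosSemidef.dotProduct_mulVec_le_of_sub [CommRing R] [PartialOrder R] [StarRing R]
    [IsOrderedAddMonoid R] {A B : Matrix n n R} (h : (A - B).PosSemidef) (x : n → R) :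
    star x ⬝ᵥ B *ᵥ x ≤ star x ⬝ᵥ A *ᵥ x := by
  have hnonneg := h.dotProduct_mulVec_nonneg x
  rwa [sub_mulVec, dotProduct_sub, sub_nonneg] at hnonneg

end Matrix

theorem stmt11_general (p m : ℕ)
    (lamLp lamRp : Fin p → ℝ) (lamLm lamRm : Fin m → ℝ)
    (Mp : Matrix (Fin p) (Fin p) ℝ) (Mm : Matrix (Fin m) (Fin m) ℝ)
    (μp μm : ℝ)
    (h1 : (Matrix.diagonal lamLp - μp • (Mpᵀ * Matrix.diagonal lamRp * Mp)).PosSemidef)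
    (h2 : (μm • Matrix.diagonal lamRm - Mmᵀ * Matrix.diagonal lamLm * Mm).PosSemidef) :
    ∀ (wLp : Fin p → ℝ) (wRm : Fin m → ℝ),
      -(1 / 2) * (wLp ⬝ᵥ (Matrix.diagonal lamLp).mulVec wLp
          - μp * (Mp.mulVec wLp ⬝ᵥ (Matrix.diagonal lamRp).mulVec (Mp.mulVec wLp)))
        - (1 / 2) * (μm * (wRm ⬝ᵥ (Matrix.diagonal lamRm).mulVec wRm)
          - Mm.mulVec wRm ⬝ᵥ (Matrix.diagonal lamLm).mulVec (Mm.mulVec wRm)) ≤ 0 := by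
  intro wLp wRm
  have hL := h1.dotProduct_mulVec_le_of_sub wLp
  have hR := h2.dotProduct_mulVec_le_of_sub wRm
  simp only [star_trivial, smul_mulVec, dotProduct_smul, smul_eq_mul,
    dotProduct_transpose_mul_mul_mulVec] at hL hR
  linarith

/-- If discount factors `μ± > 0` make `Λ̄_L⁺ - μ⁺ M̄⁺ᵀ Λ̄_R⁺ M̄⁺` and
`μ⁻|Λ̄_R⁻| - M̄⁻ᵀ|Λ̄_L⁻|M̄⁻` positive semidefinite, then the discounted interface
term `Q_B` is nonpositive for all characteristic data. -/
theorem stmt11 (p m : ℕ)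
    (lamLp lamRp : Fin p → ℝ) (lamLm lamRm : Fin m → ℝ)
    (hLp : ∀ i, 0 < lamLp i) (hRp : ∀ i, 0 < lamRp i)
    (hLm : ∀ i, 0 < lamLm i) (hRm : ∀ i, 0 < lamRm i)
    (Mp : Matrix (Fin p) (Fin p) ℝ) (Mm : Matrix (Fin m) (Fin m) ℝ)
    (μp μm : ℝ) (hμp : 0 < μp) (hμm : 0 < μm)
    (h1 : (Matrix.diagonal lamLp - μp • (Mpᵀ * Matrix.diagonal lamRp * Mp)).PosSemidef)
    (h2 : (μm • Matrix.diagonal lamRm - Mmᵀ * Matrix.diagonal lamLm * Mm).PosSemidef) :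
    ∀ (wLp : Fin p → ℝ) (wRm : Fin m → ℝ),
      -(1 / 2) * (wLp ⬝ᵥ (Matrix.diagonal lamLp).mulVec wLp
          - μp * (Mp.mulVec wLp ⬝ᵥ (Matrix.diagonal lamRp).mulVec (Mp.mulVec wLp)))
        - (1 / 2) * (μm * (wRm ⬝ᵥ (Matrix.diagonal lamRm).mulVec wRm)
          - Mm.mulVec wRm ⬝ᵥ (Matrix.diagonal lamLm).mulVec (Mm.mulVec wRm)) ≤ 0 :=
  stmt11_general p m lamLp lamRp lamLm lamRm Mp Mm μp μm h1 h2
end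

section
/- For the 1D symmetrized acoustic system with sound speeds c_L, c_R > 0 and impedances z_L = ρ_L c_L, z_R = ρ_R c_R, the Rankine-Hugoniot condition A_L u(0⁻) = A_R u(0⁺) (with A = [[0, ρc²],[1/ρ, 0]]) determines the upwind interface state uniquely: given the left state (p_L, v_L) and right state (p_R, v_R), the system for the transmitted/reflected characteristic amplitudes has a unique solution because the eigenvector matrix is the same constant orthogonal matrix on both sides (eigenvectors (1, 1/z)-type directions in symmetrized variables are (1, ±1)/√2), so the coupling matrix M = M_LR⁻¹ M_RL exists and is diagonal. -/
/-!
In symmetrized variables both flux matrices `[[0, c], [c, 0]]` are diagonalized by the same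
orthogonal matrix `P = (1/√2) [[1, 1], [1, -1]]`, independently of `c`. Hence
`M_LR = P · diag(-c_R, -c_L)` and `M_RL = P · diag(-c_L, -c_R)` share the invertible left
factor `P`, which cancels in `M_LR⁻¹ M_RL`, leaving the diagonal matrix `diag(c_L/c_R, c_R/c_L)`.
-/

open Matrix

section

variable {n K : Type*} [Fintype n] [DecidableEq n] [Field K]

theorem isUnit_mul_diagonal {A : Matrix n n K} (hA : IsUnit A) {d : n → K}
    (hd : ∀ i, d i ≠ 0) : IsUnit (A * diagonal d) :=
  hA.mul (isUnit_diagonal.mpr (Pi.isUnit_iff.mpr fun i => (hd i).isUnit))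

theorem inv_mul_diagonal_mul_mul_diagonal {A : Matrix n n K} (hA : IsUnit A) {d : n → K}
    (hd : ∀ i, d i ≠ 0) (e : n → K) :
    (A * diagonal d)⁻¹ * (A * diagonal e) = diagonal (e / d) := by
  have hfactor : A * diagonal e = A * diagonal d * diagonal (e / d) := by
    rw [Matrix.mul_assoc, diagonal_mul_diagonal]
    congr 2
    funext i
    simp only [Pi.div_apply, mul_div_cancel₀ _ (hd i)]
  rw [hfactor, nonsing_inv_mul_cancel_left _ _
    ((isUnit_iff_isUnit_det _).mp (isUnit_mul_diagonal hA hd))]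

end

theorem sub_mul_diagonal_fin_two {R : Type*} [Ring R] (P : Matrix (Fin 2) (Fin 2) R) (a b : R) :
    P * diagonal ![0, -a] - P * diagonal ![b, 0] = P * diagonal ![-b, -a] := by
  rw [← Matrix.mul_sub, diagonal_sub]
  congr 2
  funext i
  fin_cases i <;> simp

theorem inv_sqrt_two_mul_self : (Real.sqrt 2)⁻¹ * (Real.sqrt 2)⁻¹ = 2⁻¹ := by
  rw [← mul_inv, Real.mul_self_sqrt zero_le_two]

theorem transpose_hadamard_fin_two : !![(1 : ℝ), 1; 1, -1]ᵀ = !![1, 1; 1, -1] := by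
  ext i j
  fin_cases i <;> fin_cases j <;> rfl

theorem transpose_mul_self_hadamard_fin_two :
    ((Real.sqrt 2)⁻¹ • !![(1 : ℝ), 1; 1, -1])ᵀ * ((Real.sqrt 2)⁻¹ • !![(1 : ℝ), 1; 1, -1]) = 1 := by
  rw [transpose_smul, transpose_hadamard_fin_two, smul_mul_smul_comm, inv_sqrt_two_mul_self,
    mul_fin_two, one_fin_two, smul_of, smul_cons, smul_cons]
  norm_num

theorem hadamard_diagonal_conj_fin_two (c : ℝ) :
    !![0, c; c, 0] = (Real.sqrt 2)⁻¹ • !![(1 : ℝ), 1; 1, -1] * diagonal ![c, -c] *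
      ((Real.sqrt 2)⁻¹ • !![(1 : ℝ), 1; 1, -1])ᵀ := by
  rw [transpose_smul, transpose_hadamard_fin_two, smul_mul, smul_mul, Matrix.mul_smul, smul_smul,
    inv_sqrt_two_mul_self, diagonal_fin_two, mul_fin_two, mul_fin_two, smul_of, smul_cons,
    smul_cons]
  norm_num
  ring

theorem stmt14_general (cL cR : ℝ)
    (hcL : 0 < cL) (hcR : 0 < cR) :
    let P : Matrix (Fin 2) (Fin 2) ℝ := (Real.sqrt 2)⁻¹ • !![1, 1; 1, -1]
    let AsL : Matrix (Fin 2) (Fin 2) ℝ := !![0, cL; cL, 0]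
    let AsR : Matrix (Fin 2) (Fin 2) ℝ := !![0, cR; cR, 0]
    let MLR : Matrix (Fin 2) (Fin 2) ℝ :=
      P * Matrix.diagonal ![0, -cL] - P * Matrix.diagonal ![cR, 0]
    let MRL : Matrix (Fin 2) (Fin 2) ℝ :=
      P * Matrix.diagonal ![0, -cR] - P * Matrix.diagonal ![cL, 0]
    Pᵀ * P = 1 ∧
    AsL = P * Matrix.diagonal ![cL, -cL] * Pᵀ ∧
    AsR = P * Matrix.diagonal ![cR, -cR] * Pᵀ ∧
    IsUnit MLR ∧
    (∃ d : Fin 2 → ℝ, MLR⁻¹ * MRL = Matrix.diagonal d) := by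
  intro P AsL AsR MLR MRL
  have hP : Pᵀ * P = 1 := transpose_mul_self_hadamard_fin_two
  have hPunit : IsUnit P := IsUnit.of_mul_eq_one_right _ hP
  have hne : ∀ i, ![-cR, -cL] i ≠ 0 := by
    intro i
    fin_cases i <;> simp [hcL.ne', hcR.ne']
  have hMLR : MLR = P * diagonal ![-cR, -cL] := sub_mul_diagonal_fin_two P cL cR
  have hMRL : MRL = P * diagonal ![-cL, -cR] := sub_mul_diagonal_fin_two P cR cL
  refine ⟨hP, hadamard_diagonal_conj_fin_two cL, hadamard_diagonal_conj_fin_two cR,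
    hMLR ▸ isUnit_mul_diagonal hPunit hne, ?_⟩
  exact ⟨_, by rw [hMLR, hMRL, inv_mul_diagonal_mul_mul_diagonal hPunit hne]⟩

/-- 1D symmetrized acoustics: the symmetrized coefficient matrix `Aˢ = [[0,c],[c,0]]`
has the same constant orthogonal eigenvector matrix `P = (1/√2)[[1,1],[1,-1]]` on both
sides of the interface (eigenvalues `±c`), so the interface matrix
`M_LR = M_L⁻ - M_R⁺` (with `M± = PΛ±`) is invertible and the Rankine-Hugoniot
coupling matrix `M = M_LR⁻¹ M_RL` exists and is diagonal; hence the upwind interface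
state is uniquely determined. -/
theorem stmt14 (ρL ρR cL cR : ℝ) (hρL : 0 < ρL) (hρR : 0 < ρR)
    (hcL : 0 < cL) (hcR : 0 < cR) :
    let P : Matrix (Fin 2) (Fin 2) ℝ := (Real.sqrt 2)⁻¹ • !![1, 1; 1, -1]
    let AsL : Matrix (Fin 2) (Fin 2) ℝ := !![0, cL; cL, 0]
    let AsR : Matrix (Fin 2) (Fin 2) ℝ := !![0, cR; cR, 0]
    let MLR : Matrix (Fin 2) (Fin 2) ℝ :=
      P * Matrix.diagonal ![0, -cL] - P * Matrix.diagonal ![cR, 0]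
    let MRL : Matrix (Fin 2) (Fin 2) ℝ :=
      P * Matrix.diagonal ![0, -cR] - P * Matrix.diagonal ![cL, 0]
    Pᵀ * P = 1 ∧
    AsL = P * Matrix.diagonal ![cL, -cL] * Pᵀ ∧
    AsR = P * Matrix.diagonal ![cR, -cR] * Pᵀ ∧
    IsUnit MLR ∧
    (∃ d : Fin 2 → ℝ, MLR⁻¹ * MRL = Matrix.diagonal d) :=
  stmt14_general cL cR hcL hcR
end

section
/- Let A_L = P Λ_L Pᵀ and A_R = P Λ_R Pᵀ be symmetric n×n matrices sharing the same orthogonal eigenvector matrix P, with no zero eigenvalues and the same inertia (number of positive eigenvalues n⁺). Then the matrix M_LR = P Λ_L⁻ - P Λ_R⁺ (restricted to the n-dimensional space of unknowns (w*⁺, w*⁻)) is invertible, and the coupling matrix M = M_LR⁻¹ M_RL is diagonal with diagonal entries λ_{L,j}/λ_{R,j} for the first n⁺ components and λ_{R,j}/λ_{L,j} for the remaining components; i.e., w*⁺ = diag(λ_{L,j}⁺/λ_{R,j}⁺) w_L⁺ and w*⁻ = diag(λ_{R,j}⁻/λ_{L,j}⁻) w_R⁻. -/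
/-!
Both `M_LR` and `M_RL` are `P` times a diagonal matrix, so `P` (invertible since `PᵀP = 1`)
cancels in `M_LR⁻¹ M_RL`, leaving a quotient of diagonals. The diagonal of `M_LR` is `-λ_R` on
the positive block and `λ_L` on the negative block, so the common inertia makes it nonvanishing.
-/

namespace Matrix

variable {n K : Type*} [Fintype n] [DecidableEq n] [Field K]

theorem isUnit_mul_diagonal {P : Matrix n n K} (hP : IsUnit P.det) {d : n → K}
    (hd : ∀ i, d i ≠ 0) : IsUnit (P * diagonal d) :=
  ((isUnit_iff_isUnit_det P).mpr hP).mul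
    (isUnit_diagonal.mpr (Pi.isUnit_iff.mpr fun i => (hd i).isUnit))

theorem mul_diagonal_inv_mul_mul_diagonal {P : Matrix n n K} (hP : IsUnit P.det) {d : n → K}
    (hd : ∀ i, d i ≠ 0) (e : n → K) :
    (P * diagonal d)⁻¹ * (P * diagonal e) = diagonal fun i => e i / d i := by
  have hinv : (P * diagonal d)⁻¹ = diagonal d⁻¹ * P⁻¹ := by
    refine inv_eq_left_inv ?_
    rw [Matrix.mul_assoc, nonsing_inv_mul_cancel_left _ _ hP, diagonal_mul_diagonal]
    simp [hd]
  rw [hinv, Matrix.mul_assoc, nonsing_inv_mul_cancel_left _ _ hP, diagonal_mul_diagonal]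
  simp only [Pi.inv_apply, div_eq_mul_inv, mul_comm]

end Matrix

open Matrix

/-- Shared eigenvectors across the jump: with `A_{L,R} = P Λ_{L,R} Pᵀ`, `PᵀP = I`,
no zero eigenvalues and common inertia, the matrix `M_LR = PΛ_L⁻ - PΛ_R⁺` is
invertible and the coupling matrix `M = M_LR⁻¹M_RL` is diagonal with entries
`λ_{L,j}/λ_{R,j}` on the positive block and `λ_{R,j}/λ_{L,j}` on the negative block. -/
theorem stmt15 (n nplus : ℕ) (P : Matrix (Fin n) (Fin n) ℝ) (hP : Pᵀ * P = 1)
    (lamL lamR : Fin n → ℝ)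
    (hpos : ∀ i : Fin n, (i : ℕ) < nplus → 0 < lamL i ∧ 0 < lamR i)
    (hneg : ∀ i : Fin n, nplus ≤ (i : ℕ) → lamL i < 0 ∧ lamR i < 0) :
    IsUnit (P * Matrix.diagonal (fun i : Fin n => if (i : ℕ) < nplus then 0 else lamL i)
        - P * Matrix.diagonal (fun i : Fin n => if (i : ℕ) < nplus then lamR i else 0)) ∧
    (P * Matrix.diagonal (fun i : Fin n => if (i : ℕ) < nplus then 0 else lamL i)
        - P * Matrix.diagonal (fun i : Fin n => if (i : ℕ) < nplus then lamR i else 0))⁻¹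
      * (P * Matrix.diagonal (fun i : Fin n => if (i : ℕ) < nplus then 0 else lamR i)
        - P * Matrix.diagonal (fun i : Fin n => if (i : ℕ) < nplus then lamL i else 0))
      = Matrix.diagonal
          (fun i : Fin n => if (i : ℕ) < nplus then lamL i / lamR i else lamR i / lamL i) := by
  have hdet : IsUnit P.det := isUnit_det_of_left_inverse hP
  have hd : ∀ i : Fin n, (if (i : ℕ) < nplus then 0 else lamL i)
      - (if (i : ℕ) < nplus then lamR i else 0) ≠ 0 := by
    intro i
    split_ifs with h
    · simpa using (hpos i h).2.ne'
    · simpa using (hneg i (not_lt.mp h)).1.ne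
  simp only [← Matrix.mul_sub, diagonal_sub]
  refine ⟨isUnit_mul_diagonal hdet hd, ?_⟩
  rw [mul_diagonal_inv_mul_mul_diagonal hdet hd]
  congr 1
  funext i
  split_ifs <;> simp [neg_div_neg_eq]
end

section
/- Under the shared-eigenvector assumption (coupling w*⁺ = diag(λ_{L,j}/λ_{R,j}) w_L⁺ componentwise, all λ's positive), the PDE interface contribution from the right-going waves, -(1/2){w_L⁺ᵀ Λ̄_L⁺ w_L⁺ - w*⁺ᵀ Λ̄_R⁺ w*⁺}, equals -(1/2) Σ_j λ_{L,j} (1 - λ_{L,j}/λ_{R,j}) (w_{L,j}⁺)², and is nonpositive for all w_L⁺ if and only if λ_{L,j} ≤ λ_{R,j} for every j. -/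
/-! Since `λ_R (λ_L / λ_R)² = λ_L² / λ_R`, the interface term is minus one half of the diagonal
quadratic form with coefficients `λ_L (1 - λ_L / λ_R)`. A diagonal form is nonnegative iff its
coefficients are (test it on the unit vectors), and for positive `λ`s the coefficient is
nonnegative iff `λ_L ≤ λ_R`. -/

open Finset

theorem mul_sq_sub_mul_div_mul_sq {K : Type*} [Field K] (a b x : K) :
    a * x ^ 2 - b * (a / b * x) ^ 2 = a * (1 - a / b) * x ^ 2 := by
  rcases eq_or_ne b 0 with rfl | hb
  · simp
  · field_simp

theorem forall_sum_mul_sq_nonneg_iff {ι K : Type*} [Fintype ι] [Ring K] [LinearOrder K]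
    [IsStrictOrderedRing K] (c : ι → K) :
    (∀ w : ι → K, 0 ≤ ∑ i, c i * w i ^ 2) ↔ ∀ i, 0 ≤ c i := by
  classical
  refine ⟨fun h j => ?_, fun h w => sum_nonneg fun i _ => mul_nonneg (h i) (sq_nonneg _)⟩
  simpa [Pi.single_apply] using h (Pi.single j 1)

theorem mul_one_sub_div_nonneg_iff {K : Type*} [Field K] [LinearOrder K] [IsStrictOrderedRing K]
    {a b : K} (ha : 0 < a) (hb : 0 < b) : 0 ≤ a * (1 - a / b) ↔ a ≤ b := by
  rw [mul_nonneg_iff_of_pos_left ha, sub_nonneg, div_le_one hb]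

/-- With diagonal Rankine-Hugoniot coupling `w*ⱼ⁺ = (λ_{L,j}/λ_{R,j}) w_{L,j}⁺`, the
right-going PDE interface contribution equals
`-(1/2)Σⱼ λ_{L,j}(1 - λ_{L,j}/λ_{R,j})(w_{L,j}⁺)²`, and it is nonpositive for all
data iff `λ_{L,j} ≤ λ_{R,j}` for every `j`. -/
theorem stmt16 (n : ℕ) (lamL lamR : Fin n → ℝ)
    (hL : ∀ i, 0 < lamL i) (hR : ∀ i, 0 < lamR i) :
    (∀ wL : Fin n → ℝ,
      -(1 / 2) * ((∑ i, lamL i * (wL i) ^ 2)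
          - ∑ i, lamR i * ((lamL i / lamR i) * wL i) ^ 2)
        = -(1 / 2) * ∑ i, lamL i * (1 - lamL i / lamR i) * (wL i) ^ 2) ∧
    ((∀ wL : Fin n → ℝ,
        -(1 / 2) * ((∑ i, lamL i * (wL i) ^ 2)
            - ∑ i, lamR i * ((lamL i / lamR i) * wL i) ^ 2) ≤ 0)
      ↔ ∀ j, lamL j ≤ lamR j) := by
  have identity : ∀ wL : Fin n → ℝ,
      -(1 / 2) * ((∑ i, lamL i * (wL i) ^ 2)
          - ∑ i, lamR i * ((lamL i / lamR i) * wL i) ^ 2)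
        = -(1 / 2) * ∑ i, lamL i * (1 - lamL i / lamR i) * (wL i) ^ 2 := fun wL => by
    simp only [← sum_sub_distrib, mul_sq_sub_mul_div_mul_sq]
  refine ⟨identity, ?_⟩
  simp only [identity, neg_mul, neg_nonpos, mul_nonneg_iff_of_pos_left one_half_pos]
  rw [forall_sum_mul_sq_nonneg_iff fun i => lamL i * (1 - lamL i / lamR i)]
  exact forall_congr' fun j => mul_one_sub_div_nonneg_iff (hL j) (hR j)
end
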